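/- Let ε > 0. Let Φ : ℝ⁴ → ℝ, h, e : ℝ⁴ → ℝ³, and ν : ℝ⁴ → ℝ³ be functions, and let p ∈ ℝ⁴ be a point at which Φ, h, e are differentiable and ∂₁Φ(p) ≠ 0. Define the 6×6 matrices A_j⁻(ν) acting by A_j⁻(ν)(h, e) = (ε h_j ν + 𝐞_j × e, ε e_j ν − 𝐞_j × h) for j = 1, 2, 3, and à ₁⁻(ν, Φ) = (1/∂₁Φ)(−ε(∂ₜΦ) I₆ + A₁⁻(ν) − (∂₂Φ)A₂⁻(ν) − (∂₃Φ)A₃⁻(ν)). Then at p, writing u = (h, e), ε∂ₜu + Ã₁⁻(ν, Φ)∂₁u + A₂⁻(ν)∂₂u + A₃⁻(ν)∂₃u = (ε∂ₜ^Φ h + ∇^Φ × e + ε(∇^Φ · h)ν, ε∂ₜ^Φ e − ∇^Φ × h + ε(∇^Φ · e)ν). -/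
import Mathlib


/-- Partial derivative `∂ᵢ f` on `ℝ⁴` (coordinates `(t, x₁, x₂, x₃)` indexed by `Fin 4`,
with `∂₀ = ∂ₜ`). -/
noncomputable def pd (i : Fin 4) (f : (Fin 4 → ℝ) → ℝ) (x : Fin 4 → ℝ) : ℝ :=
  fderiv ℝ f x (Pi.single i 1)

/-- Transformed derivative `∂ᵢ^Φ`: `∂ₜ^Φ f = ∂ₜf − (∂ₜΦ/∂₁Φ)∂₁f`,
`∂₁^Φ f = ∂₁f/∂₁Φ`, and `∂ⱼ^Φ f = ∂ⱼf − (∂ⱼΦ/∂₁Φ)∂₁f` for `j = 2, 3`. -/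
noncomputable def pdPhi (Φ : (Fin 4 → ℝ) → ℝ) (i : Fin 4) (f : (Fin 4 → ℝ) → ℝ)
    (x : Fin 4 → ℝ) : ℝ :=
  if i = 1 then pd 1 f x / pd 1 Φ x else pd i f x - pd i Φ x / pd 1 Φ x * pd 1 f x

/-- Transformed divergence `∇^Φ · u = ∂₁^Φu₁ + ∂₂^Φu₂ + ∂₃^Φu₃`. -/
noncomputable def divPhi (Φ : (Fin 4 → ℝ) → ℝ) (u : (Fin 4 → ℝ) → Fin 3 → ℝ)
    (x : Fin 4 → ℝ) : ℝ :=
  pdPhi Φ 1 (fun y => u y 0) x + pdPhi Φ 2 (fun y => u y 1) x + pdPhi Φ 3 (fun y => u y 2) x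

/-- Transformed curl
`∇^Φ × u = (∂₂^Φu₃ − ∂₃^Φu₂, ∂₃^Φu₁ − ∂₁^Φu₃, ∂₁^Φu₂ − ∂₂^Φu₁)`. -/
noncomputable def curlPhi (Φ : (Fin 4 → ℝ) → ℝ) (u : (Fin 4 → ℝ) → Fin 3 → ℝ)
    (x : Fin 4 → ℝ) : Fin 3 → ℝ :=
  ![pdPhi Φ 2 (fun y => u y 2) x - pdPhi Φ 3 (fun y => u y 1) x,
    pdPhi Φ 3 (fun y => u y 0) x - pdPhi Φ 1 (fun y => u y 2) x,
    pdPhi Φ 1 (fun y => u y 1) x - pdPhi Φ 2 (fun y => u y 0) x]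

/-- The matrix `A_j⁻(ν)` of the reduced vacuum Maxwell system, acting on `u = (h, e)` by
`A_j⁻(ν)(h, e) = (ε h_j ν + 𝐞_j × e, ε e_j ν − 𝐞_j × h)` (the index `j : Fin 3`
corresponds to the spatial direction `x_{j+1}`). -/
noncomputable def Aact (ε : ℝ) (νp : Fin 3 → ℝ) (j : Fin 3)
    (w : (Fin 3 → ℝ) × (Fin 3 → ℝ)) : (Fin 3 → ℝ) × (Fin 3 → ℝ) :=
  ((ε * w.1 j) • νp + crossProduct (Pi.single j 1) w.2,
   (ε * w.2 j) • νp - crossProduct (Pi.single j 1) w.1)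

/-- The matrix `Ã₁⁻(ν, Φ) = (1/∂₁Φ)(−ε(∂ₜΦ) I₆ + A₁⁻(ν) − (∂₂Φ)A₂⁻(ν) − (∂₃Φ)A₃⁻(ν))`,
acting on `w = (h, e)`. -/
noncomputable def Atilde (ε : ℝ) (νp : Fin 3 → ℝ) (dtΦ d1Φ d2Φ d3Φ : ℝ)
    (w : (Fin 3 → ℝ) × (Fin 3 → ℝ)) : (Fin 3 → ℝ) × (Fin 3 → ℝ) :=
  d1Φ⁻¹ • ((-(ε * dtΦ)) • w + Aact ε νp 0 w - d2Φ • Aact ε νp 1 w - d3Φ • Aact ε νp 2 w)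

set_option maxHeartbeats 2000000 in
/-- The fixed-domain vacuum operator `ε∂ₜu + Ã₁⁻(ν, Φ)∂₁u + A₂⁻(ν)∂₂u + A₃⁻(ν)∂₃u` for
`u = (h, e)` equals the reduced vacuum Maxwell system in transformed coordinates:
`(ε∂ₜ^Φ h + ∇^Φ × e + ε(∇^Φ·h)ν, ε∂ₜ^Φ e − ∇^Φ × h + ε(∇^Φ·e)ν)`. -/
theorem stmt_14 (ε : ℝ) (hε : 0 < ε)
    (Φ : (Fin 4 → ℝ) → ℝ) (h e ν : (Fin 4 → ℝ) → Fin 3 → ℝ) (p : Fin 4 → ℝ)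
    (hΦ : DifferentiableAt ℝ Φ p) (hh : DifferentiableAt ℝ h p)
    (he : DifferentiableAt ℝ e p) (hΦ1 : pd 1 Φ p ≠ 0) :
    ε • ((fun i : Fin 3 => pd 0 (fun x => h x i) p),
         (fun i : Fin 3 => pd 0 (fun x => e x i) p))
      + Atilde ε (ν p) (pd 0 Φ p) (pd 1 Φ p) (pd 2 Φ p) (pd 3 Φ p)
          ((fun i : Fin 3 => pd 1 (fun x => h x i) p),
           (fun i : Fin 3 => pd 1 (fun x => e x i) p))
      + Aact ε (ν p) 1
          ((fun i : Fin 3 => pd 2 (fun x => h x i) p),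
           (fun i : Fin 3 => pd 2 (fun x => e x i) p))
      + Aact ε (ν p) 2
          ((fun i : Fin 3 => pd 3 (fun x => h x i) p),
           (fun i : Fin 3 => pd 3 (fun x => e x i) p))
    = ((fun i : Fin 3 =>
          ε * pdPhi Φ 0 (fun x => h x i) p + curlPhi Φ e p i + ε * divPhi Φ h p * ν p i),
       (fun i : Fin 3 =>
          ε * pdPhi Φ 0 (fun x => e x i) p - curlPhi Φ h p i + ε * divPhi Φ e p * ν p i)) := by
  have c0 : ∀ v : Fin 3 → ℝ, crossProduct (Pi.single (0:Fin 3) 1) v = ![0, -v 2, v 1] := by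
    intro v; funext i; fin_cases i <;> simp [crossProduct]
  have c1 : ∀ v : Fin 3 → ℝ, crossProduct (Pi.single (1:Fin 3) 1) v = ![v 2, 0, -v 0] := by
    intro v; funext i; fin_cases i <;> simp [crossProduct]
  have c2 : ∀ v : Fin 3 → ℝ, crossProduct (Pi.single (2:Fin 3) 1) v = ![-v 1, v 0, 0] := by
    intro v; funext i; fin_cases i <;> simp [crossProduct]
  refine Prod.ext ?_ ?_ <;>
  · funext i
    fin_cases i <;>
    · simp [Atilde, Aact, curlPhi, divPhi, pdPhi, c0, c1, c2,
        Matrix.vecHead, Matrix.vecTail, Function.comp,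
        show (0:Fin 4) ≠ 1 by decide, show (2:Fin 4) ≠ 1 by decide,
        show (3:Fin 4) ≠ 1 by decide]
      field_simp
      ring
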